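/- For smooth functions v(x,y,t,w), the recursive flows (∂_t - λ∂_y)Ψ = -v_y ∂_xΨ and (∂_w - λ∂_t)Ψ = -v_t ∂_xΨ, rewritten as vector fields V₁ = ∂_t - λ∂_y + v_y∂_x and V₂ = ∂_w - λ∂_t + v_t∂_x, commute for all λ if and only if v satisfies the four-dimensional equation v_{wy} = v_{tt} + v_y v_{xt} - v_{yx} v_t. -/

import Mathlib

/- STATEMENT 17: The vector fields V₁ = ∂_t - λ∂_y + v_y∂_x and V₂ = ∂_w - λ∂_t + v_t∂_x
commute for all λ iff v satisfies the four-dimensional equation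
v_{wy} = v_{tt} + v_y v_{xt} - v_{yx} v_t.
Coordinates on ℝ⁴: 0 = x, 1 = y, 2 = t, 3 = w. -/

noncomputable def pd {n : ℕ} (i : Fin n) (f : (Fin n → ℝ) → ℝ) : (Fin n → ℝ) → ℝ :=
  fun x => fderiv ℝ f x (Pi.single i 1)

/-- V₁ = ∂_t - λ∂_y + v_y∂_x -/
noncomputable def V₁ (v : (Fin 4 → ℝ) → ℝ) (lam : ℝ) (f : (Fin 4 → ℝ) → ℝ) :
    (Fin 4 → ℝ) → ℝ :=
  fun p => pd 2 f p - lam * pd 1 f p + pd 1 v p * pd 0 f p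

/-- V₂ = ∂_w - λ∂_t + v_t∂_x -/
noncomputable def V₂ (v : (Fin 4 → ℝ) → ℝ) (lam : ℝ) (f : (Fin 4 → ℝ) → ℝ) :
    (Fin 4 → ℝ) → ℝ :=
  fun p => pd 3 f p - lam * pd 2 f p + pd 2 v p * pd 0 f p

lemma contDiff_pd {n : ℕ} (i : Fin n) {f : (Fin n → ℝ) → ℝ} (hf : ContDiff ℝ (⊤ : ℕ∞) f) :
    ContDiff ℝ (⊤ : ℕ∞) (pd i f) :=
  (hf.fderiv_right (by simp)).clm_apply contDiff_const

lemma pd_pd {n : ℕ} (i j : Fin n) {f : (Fin n → ℝ) → ℝ} (hf : ContDiff ℝ (⊤ : ℕ∞) f)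
    (p : Fin n → ℝ) :
    pd i (pd j f) p = fderiv ℝ (fderiv ℝ f) p (Pi.single i 1) (Pi.single j 1) := by
  have hdf : DifferentiableAt ℝ (fderiv ℝ f) p :=
    ((hf.fderiv_right (m := (⊤ : ℕ∞)) (by simp)).differentiable (by simp)).differentiableAt
  have : pd j f = (ContinuousLinearMap.apply ℝ ℝ (Pi.single j 1)) ∘ (fderiv ℝ f) := rfl
  have h1 := (ContinuousLinearMap.apply ℝ ℝ (Pi.single j 1)).hasFDerivAt.comp p hdf.hasFDerivAt
  rw [show pd i (pd j f) p = fderiv ℝ (pd j f) p (Pi.single i 1) from rfl, this, h1.fderiv]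
  rfl

lemma pd_comm {n : ℕ} (i j : Fin n) {f : (Fin n → ℝ) → ℝ} (hf : ContDiff ℝ (⊤ : ℕ∞) f)
    (p : Fin n → ℝ) : pd i (pd j f) p = pd j (pd i f) p := by
  rw [pd_pd i j hf, pd_pd j i hf]
  exact (hf.contDiffAt.isSymmSndFDerivAt (by rw [minSmoothness_of_isRCLikeNormedField]; exact WithTop.coe_le_coe.mpr le_top)).eq _ _

lemma pd_comb {n : ℕ} (k : Fin n) (a b c d : (Fin n → ℝ) → ℝ) (lam : ℝ) (p : Fin n → ℝ)
    (ha : DifferentiableAt ℝ a p) (hb : DifferentiableAt ℝ b p)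
    (hc : DifferentiableAt ℝ c p) (hd : DifferentiableAt ℝ d p) :
    pd k (fun x => a x - lam * b x + c x * d x) p
      = pd k a p - lam * pd k b p + (pd k c p * d p + c p * pd k d p) := by
  have h := ((ha.hasFDerivAt.sub (hb.hasFDerivAt.const_mul lam)).add
    (hc.hasFDerivAt.mul hd.hasFDerivAt))
  unfold pd
  rw [show (fun x => a x - lam * b x + c x * d x) = ((a - fun y => lam * b y) + c * d) from rfl,
    h.fderiv]
  simp [pd]
  ring

lemma pd_coord {n : ℕ} (i j : Fin n) (q : Fin n → ℝ) :
    pd i (fun x : Fin n → ℝ => x j) q = (Pi.single i 1 : Fin n → ℝ) j := by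
  have : (fun x : Fin n → ℝ => x j)
      = ⇑(ContinuousLinearMap.proj (R := ℝ) (φ := fun _ : Fin n => ℝ) j) := rfl
  rw [show pd i (fun x : Fin n → ℝ => x j) q
      = fderiv ℝ (fun x : Fin n → ℝ => x j) q (Pi.single i 1) from rfl, this,
    ContinuousLinearMap.fderiv]
  rfl

theorem stmt17 (v : (Fin 4 → ℝ) → ℝ) (hv : ContDiff ℝ (⊤ : ℕ∞) v) :
    (∀ (lam : ℝ) (f : (Fin 4 → ℝ) → ℝ), ContDiff ℝ (⊤ : ℕ∞) f →
        ∀ p, V₁ v lam (V₂ v lam f) p = V₂ v lam (V₁ v lam f) p) ↔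
    (∀ p, pd 1 (pd 3 v) p =
        pd 2 (pd 2 v) p + pd 1 v p * pd 0 (pd 2 v) p - pd 0 (pd 1 v) p * pd 2 v p) := by
  constructor
  · intro h p
    have hc : ContDiff ℝ (⊤ : ℕ∞) (fun q : Fin 4 → ℝ => q 0) :=
      (ContinuousLinearMap.proj (R := ℝ) (φ := fun _ : Fin 4 => ℝ) 0).contDiff
    have key := h 0 (fun q => q 0) hc p
    have h1 : V₂ v 0 (fun q : Fin 4 → ℝ => q 0) = pd 2 v := by
      funext q
      simp [V₂, pd_coord, Pi.single_eq_same,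
        Pi.single_eq_of_ne (show (0 : Fin 4) ≠ 3 by decide),
        Pi.single_eq_of_ne (show (0 : Fin 4) ≠ 2 by decide)]
    have h2 : V₁ v 0 (fun q : Fin 4 → ℝ => q 0) = pd 1 v := by
      funext q
      simp [V₁, pd_coord, Pi.single_eq_same,
        Pi.single_eq_of_ne (show (0 : Fin 4) ≠ 2 by decide),
        Pi.single_eq_of_ne (show (0 : Fin 4) ≠ 1 by decide)]
    rw [h1, h2] at key
    simp only [V₁, V₂] at key
    rw [pd_comm 3 1 hv] at key
    linarith
  · intro hpde lam f hf p
    have Df : ∀ i : Fin 4, DifferentiableAt ℝ (pd i f) p := fun i =>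
      ((contDiff_pd i hf).differentiable (by simp)).differentiableAt
    have Dv : ∀ i : Fin 4, DifferentiableAt ℝ (pd i v) p := fun i =>
      ((contDiff_pd i hv).differentiable (by simp)).differentiableAt
    simp only [V₁, V₂]
    have hV2 : (fun x => pd 3 f x - lam * pd 2 f x + pd 2 v x * pd 0 f x) = V₂ v lam f := rfl
    have hV1 : (fun x => pd 2 f x - lam * pd 1 f x + pd 1 v x * pd 0 f x) = V₁ v lam f := rfl
    rw [← hV1, ← hV2]
    rw [pd_comb 2 (pd 3 f) (pd 2 f) (pd 2 v) (pd 0 f) lam p (Df 3) (Df 2) (Dv 2) (Df 0),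
      pd_comb 1 (pd 3 f) (pd 2 f) (pd 2 v) (pd 0 f) lam p (Df 3) (Df 2) (Dv 2) (Df 0),
      pd_comb 0 (pd 3 f) (pd 2 f) (pd 2 v) (pd 0 f) lam p (Df 3) (Df 2) (Dv 2) (Df 0),
      pd_comb 3 (pd 2 f) (pd 1 f) (pd 1 v) (pd 0 f) lam p (Df 2) (Df 1) (Dv 1) (Df 0),
      pd_comb 2 (pd 2 f) (pd 1 f) (pd 1 v) (pd 0 f) lam p (Df 2) (Df 1) (Dv 1) (Df 0),
      pd_comb 0 (pd 2 f) (pd 1 f) (pd 1 v) (pd 0 f) lam p (Df 2) (Df 1) (Dv 1) (Df 0)]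
    rw [pd_comm 3 2 hf p, pd_comm 3 1 hf p, pd_comm 3 0 hf p, pd_comm 2 1 hf p,
      pd_comm 2 0 hf p, pd_comm 1 0 hf p, pd_comm 2 1 hv p, pd_comm 3 1 hv p]
    linear_combination (-(pd 0 f p)) * hpde p
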